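/- arXiv:1907.04713 — 5 statements merged into one kernel-verified Lean document; each statement's English description precedes it below -/
import Mathlib

section
/- For an i.i.d. source with entropy H over a finite alphabet and any one-to-one code sequence γ, almost surely liminf_n ||γ(X_1,...,X_n)||/n ≥ H. -/
/-!
By the strong law of large numbers the self-information `-log₂ P(X₁ⁿ) = ∑ᵢ -log₂ p(Xᵢ)` is
eventually at least `n(H - δ)`. An injective code has at most `2^(m+1)` codewords of length
`≤ m`, and each outcome of probability `≤ 2^(-n(H-δ))` contributes at most that much, so the
event "code length `≤ n(H - 2δ)` and `P(X₁ⁿ) ≤ 2^(-n(H-δ))`" has probability `≤ 2 · 2^(-nδ)`.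
By Borel–Cantelli it occurs only finitely often, hence `liminf ‖γ(X₁ⁿ)‖ / n ≥ H - 2δ` a.s.
-/

open MeasureTheory Filter ENNReal Topology ProbabilityTheory Finset

-- The trailing digit `1` keeps trailing `false`s from being lost in `Nat.ofDigits`.
def boolDigits (l : List Bool) : List ℕ := l.map Bool.toNat ++ [1]

theorem boolDigits_lt_two (l : List Bool) : ∀ d ∈ boolDigits l, d < 2 := by
  simp only [boolDigits, List.mem_append, List.mem_map, List.mem_singleton]
  rintro d (⟨b, -, rfl⟩ | rfl)
  · exact Bool.toNat_lt b
  · exact one_lt_two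

theorem ofDigits_boolDigits_lt (l : List Bool) :
    Nat.ofDigits 2 (boolDigits l) < 2 ^ (l.length + 1) := by
  simpa [boolDigits] using Nat.ofDigits_lt_base_pow_length one_lt_two (boolDigits_lt_two l)

theorem ofDigits_boolDigits_injective :
    Function.Injective fun l => Nat.ofDigits 2 (boolDigits l) := by
  intro l₁ l₂ h
  have digits_eq (l : List Bool) : Nat.digits 2 (Nat.ofDigits 2 (boolDigits l)) = boolDigits l :=
    Nat.digits_ofDigits 2 one_lt_two _ (boolDigits_lt_two l) (by simp [boolDigits])
  have hdigits : boolDigits l₁ = boolDigits l₂ := by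
    rw [← digits_eq l₁, ← digits_eq l₂]
    exact congrArg _ h
  exact List.map_injective_iff.mpr (fun a b => by cases a <;> cases b <;> simp)
    (List.append_cancel_right hdigits)

theorem card_filter_length_le_le {β : Type*} [Fintype β] {g : β → List Bool}
    (hg : Function.Injective g) (m : ℕ) :
    #{x | (g x).length ≤ m} ≤ 2 ^ (m + 1) := by
  simpa using card_le_card_of_injOn (fun x => Nat.ofDigits 2 (boolDigits (g x)))
    (t := range (2 ^ (m + 1)))
    (fun x hx => by
      simp only [coe_filter, mem_univ, true_and, Set.mem_ofPred_eq] at hx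
      rw [coe_range, Set.mem_Iio]
      exact (ofDigits_boolDigits_lt (g x)).trans_le (Nat.pow_le_pow_right two_pos (by omega)))
    (fun x _ y _ h => hg (ofDigits_boolDigits_injective h))

theorem measure_preimage_pi_singleton {Ω ι α : Type*} [MeasurableSpace Ω] [Fintype ι]
    [MeasurableSpace α] [MeasurableSingletonClass α] {μ : Measure Ω} {X : ι → Ω → α}
    (hindep : iIndepFun X μ) (x : ι → α) :
    μ ((fun ω i => X i ω) ⁻¹' {x}) = ∏ i, μ (X i ⁻¹' {x i}) := by
  convert hindep.measure_inter_preimage_eq_mul univ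
    (fun i _ => measurableSet_singleton (x i)) using 2
  ext; simp [funext_iff]

theorem measure_length_le_and_measure_le {Ω β : Type*} [MeasurableSpace Ω] [Fintype β]
    (μ : Measure Ω) (Z : Ω → β) {g : β → List Bool} (hg : Function.Injective g) (m : ℕ)
    (θ : ℝ≥0∞) :
    μ {ω | (g (Z ω)).length ≤ m ∧ μ (Z ⁻¹' {Z ω}) ≤ θ} ≤ 2 ^ (m + 1) * θ := by
  classical
  set s : Finset β := {z | (g z).length ≤ m ∧ μ (Z ⁻¹' {z}) ≤ θ}
  calc μ {ω | (g (Z ω)).length ≤ m ∧ μ (Z ⁻¹' {Z ω}) ≤ θ}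
      ≤ μ (⋃ z ∈ s, Z ⁻¹' {z}) :=
        measure_mono fun ω hω => Set.mem_biUnion (x := Z ω) (by simpa [s] using hω) rfl
    _ ≤ ∑ z ∈ s, μ (Z ⁻¹' {z}) := measure_biUnion_finset_le s _
    _ ≤ ∑ _z ∈ s, θ := sum_le_sum fun z hz => (mem_filter.1 hz).2.2
    _ = #s * θ := by rw [sum_const, nsmul_eq_mul]
    _ ≤ 2 ^ (m + 1) * θ := by
        gcongr
        exact_mod_cast (card_le_card (monotone_filter_right _ fun _ _ => And.left)).trans
          (card_filter_length_le_le hg m)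

theorem prod_le_two_rpow_neg_of_le_sum {ι : Type*} {s : Finset ι} {q : ι → ℝ}
    (hq : ∀ i ∈ s, 0 ≤ q i) {t : ℝ} (ht : t ≤ ∑ i ∈ s, -Real.logb 2 (q i)) :
    ∏ i ∈ s, q i ≤ 2 ^ (-t) := by
  by_cases hzero : ∃ i ∈ s, q i = 0
  · rw [prod_eq_zero_iff.2 hzero]
    positivity
  push Not at hzero
  have hpos : 0 < ∏ i ∈ s, q i := prod_pos fun i hi => (hq i hi).lt_of_ne' (hzero i hi)
  rw [← Real.rpow_logb two_pos (by norm_num) hpos, Real.logb_prod s q hzero]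
  refine Real.rpow_le_rpow_of_exponent_le one_le_two ?_
  simpa [sum_neg_distrib] using neg_le_neg ht

theorem eventually_mul_le_of_tendsto_inv_mul {s : ℕ → ℝ} {L a : ℝ}
    (h : Tendsto (fun n : ℕ => (n : ℝ)⁻¹ * s n) atTop (𝓝 L)) (ha : a < L) :
    ∀ᶠ n : ℕ in atTop, n * a ≤ s n := by
  filter_upwards [h.eventually_const_lt ha, eventually_gt_atTop 0] with n hn hpos
  exact ((lt_inv_mul_iff₀ (Nat.cast_pos.2 hpos)).1 hn).le

theorem ofReal_le_liminf_div {u : ℕ → ℕ} {c : ℝ} (h : ∀ᶠ n : ℕ in atTop, n * c ≤ u n) :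
    ENNReal.ofReal c ≤ atTop.liminf fun n => (u n : ℝ≥0∞) / n := by
  refine le_liminf_of_le (by isBoundedDefault) ?_
  filter_upwards [h, eventually_gt_atTop 0] with n hn hpos
  rw [ENNReal.le_div_iff_mul_le (Or.inl (by exact_mod_cast hpos.ne')) (Or.inl (natCast_ne_top n)),
    ← ofReal_natCast, ← ofReal_mul' n.cast_nonneg, ← ofReal_natCast (u n)]
  exact ofReal_le_ofReal (by linarith)

theorem ae_ofReal_le_of_forall_pos {Ω : Type*} [MeasurableSpace Ω] {μ : Measure Ω}
    {f : Ω → ℝ≥0∞} {c : ℝ} (h : ∀ ε > 0, ∀ᵐ ω ∂μ, ENNReal.ofReal (c - ε) ≤ f ω) :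
    ∀ᵐ ω ∂μ, ENNReal.ofReal c ≤ f ω := by
  filter_upwards [ae_all_iff.2 fun k : ℕ => h (1 / (k + 1)) Nat.one_div_pos_of_nat] with ω hω
  refine le_of_tendsto' (x := atTop) ((ENNReal.continuous_ofReal.tendsto c).comp ?_) hω
  simpa using tendsto_one_div_add_atTop_nhds_zero_nat.const_sub c

section IID

variable {α Ω : Type*} [MeasurableSpace Ω] {μ : Measure Ω} [IsProbabilityMeasure μ]
  {X : ℕ → Ω → α} {p : α → ℝ}

theorem measure_preimage_singleton_eq_ofReal (hdist : ∀ i a, (μ (X i ⁻¹' {a})).toReal = p a)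
    (i : ℕ) (a : α) : μ (X i ⁻¹' {a}) = ENNReal.ofReal (p a) := by
  rw [← hdist i a, ofReal_toReal (measure_ne_top μ _)]

variable [MeasurableSpace α] [MeasurableSingletonClass α]

theorem measure_preimage_block_singleton (hindep : iIndepFun X μ)
    (hdist : ∀ i a, (μ (X i ⁻¹' {a})).toReal = p a) (n : ℕ) (x : Fin n → α) :
    μ ((fun ω (i : Fin n) => X i ω) ⁻¹' {x}) = ENNReal.ofReal (∏ i, p (x i)) := by
  rw [ofReal_prod_of_nonneg fun i _ => hdist 0 (x i) ▸ toReal_nonneg]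
  simpa [measure_preimage_singleton_eq_ofReal hdist] using measure_preimage_pi_singleton
    (hindep.precomp (g := fun i : Fin n => (i : ℕ)) Fin.val_injective) x

variable [Fintype α]

theorem identDistrib_of_measure_preimage_singleton (hXmeas : ∀ i, Measurable (X i))
    (hdist : ∀ i a, (μ (X i ⁻¹' {a})).toReal = p a) (i j : ℕ) :
    IdentDistrib (X i) (X j) μ μ where
  aemeasurable_fst := (hXmeas i).aemeasurable
  aemeasurable_snd := (hXmeas j).aemeasurable
  map_eq := Measure.ext_of_singleton fun a => by
    simp only [Measure.map_apply (hXmeas _) (measurableSet_singleton a),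
      measure_preimage_singleton_eq_ofReal hdist]

theorem ae_tendsto_average_comp (hXmeas : ∀ i, Measurable (X i)) (hindep : iIndepFun X μ)
    (hdist : ∀ i a, (μ (X i ⁻¹' {a})).toReal = p a) (f : α → ℝ) :
    ∀ᵐ ω ∂μ, Tendsto (fun n : ℕ => (n : ℝ)⁻¹ * ∑ i ∈ range n, f (X i ω)) atTop
      (𝓝 (∑ a, p a * f a)) := by
  have hf : Measurable f := measurable_of_finite f
  have hint : Integrable f (μ.map (X 0)) := .of_finite
  have hmean : ∫ ω, f (X 0 ω) ∂μ = ∑ a, p a * f a := by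
    rw [← integral_map (hXmeas 0).aemeasurable hf.aestronglyMeasurable, integral_fintype hint]
    simp [measureReal_def, Measure.map_apply (hXmeas 0) (measurableSet_singleton _), hdist]
  simpa [hmean] using strong_law_ae (fun i ω => f (X i ω))
    ((integrable_map_measure hf.aestronglyMeasurable (hXmeas 0).aemeasurable).1 hint)
    (fun i j hij => (hindep.comp (fun _ => f) fun _ => hf).indepFun hij)
    (fun i => (identDistrib_of_measure_preimage_singleton hXmeas hdist i 0).comp hf)

theorem measure_short_code_high_selfInfo_le (hindep : iIndepFun X μ)
    (hdist : ∀ i a, (μ (X i ⁻¹' {a})).toReal = p a) {n : ℕ} {g : (Fin n → α) → List Bool}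
    (hg : Function.Injective g) {c : ℝ} (hc : 0 ≤ c) (δ : ℝ) :
    μ {ω | (g fun i => X i ω).length ≤ ⌊n * c⌋₊ ∧
        n * (c + δ) ≤ ∑ i ∈ range n, -Real.logb 2 (p (X i ω))} ≤
      ENNReal.ofReal (2 * (2 ^ (-δ)) ^ n) := by
  set m := ⌊n * c⌋₊
  calc _ ≤ μ {ω | (g fun i => X i ω).length ≤ m ∧
          μ ((fun ω (i : Fin n) => X i ω) ⁻¹' {fun i : Fin n => X i ω}) ≤
            ENNReal.ofReal (2 ^ (-(n * (c + δ))))} := by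
        refine measure_mono fun ω ⟨hlen, hinfo⟩ => ⟨hlen, ?_⟩
        rw [measure_preimage_block_singleton hindep hdist]
        refine ofReal_le_ofReal (prod_le_two_rpow_neg_of_le_sum
          (fun i _ => hdist 0 _ ▸ toReal_nonneg) ?_)
        rwa [Fin.sum_univ_eq_sum_range (fun i => -Real.logb 2 (p (X i ω)))]
    _ ≤ 2 ^ (m + 1) * ENNReal.ofReal (2 ^ (-(n * (c + δ)))) :=
        measure_length_le_and_measure_le μ _ hg m _
    _ = ENNReal.ofReal (2 ^ (m + 1) * 2 ^ (-(n * (c + δ)))) := by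
        rw [ofReal_mul (by positivity)]; norm_cast
    _ ≤ ENNReal.ofReal (2 * (2 ^ (-δ)) ^ n) := by
        refine ofReal_le_ofReal ?_
        have hm : (2 : ℝ) ^ (m + 1) ≤ 2 ^ (n * c + 1) := by
          rw [← Real.rpow_natCast]
          exact Real.rpow_le_rpow_of_exponent_le one_le_two
            (by push_cast; linarith [Nat.floor_le (by positivity : 0 ≤ n * c)])
        calc (2 : ℝ) ^ (m + 1) * 2 ^ (-(n * (c + δ)))
            ≤ 2 ^ (n * c + 1) * 2 ^ (-(n * (c + δ))) := by gcongr
          _ = 2 * (2 ^ (-δ)) ^ n := by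
            rw [← Real.rpow_add two_pos, ← Real.rpow_natCast, ← Real.rpow_mul zero_le_two,
              show n * c + 1 + -(n * (c + δ)) = 1 + -δ * n by ring, Real.rpow_add two_pos,
              Real.rpow_one]

theorem ae_eventually_lt_length (hindep : iIndepFun X μ)
    (hdist : ∀ i a, (μ (X i ⁻¹' {a})).toReal = p a) {γ : ∀ n : ℕ, (Fin n → α) → List Bool}
    (hγ : ∀ n, Function.Injective (γ n)) {c δ : ℝ} (hc : 0 ≤ c) (hδ : 0 < δ) :
    ∀ᵐ ω ∂μ, ∀ᶠ n : ℕ in atTop, n * (c + δ) ≤ ∑ i ∈ range n, -Real.logb 2 (p (X i ω)) →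
      n * c < (γ n fun i => X i ω).length := by
  have hsum : Summable fun n : ℕ => 2 * ((2 : ℝ) ^ (-δ)) ^ n :=
    (summable_geometric_of_lt_one (by positivity)
      (Real.rpow_lt_one_of_one_lt_of_neg one_lt_two (neg_neg_of_pos hδ))).mul_left 2
  have hbad := ae_eventually_notMem <| ne_top_of_le_ne_top ofReal_ne_top <|
    (ENNReal.tsum_le_tsum fun n =>
      measure_short_code_high_selfInfo_le hindep hdist (hγ n) hc δ).trans_eq
      (ofReal_tsum_of_nonneg (fun n => by positivity) hsum).symm
  filter_upwards [hbad] with ω hω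
  filter_upwards [hω] with n hn hinfo
  exact Nat.lt_of_floor_lt (not_le.1 fun hlen => hn ⟨hlen, hinfo⟩)

end IID

/-- For an i.i.d. source with entropy `H` and any one-to-one code sequence `γ`,
almost surely `liminf_n ‖γ(X_1,…,X_n)‖ / n ≥ H`. -/
theorem liminf_code_length_ge_entropy_iid {α : Type*} [Fintype α] [MeasurableSpace α]
    [MeasurableSingletonClass α]
    {Ω : Type*} [MeasurableSpace Ω] (μ : Measure Ω) [IsProbabilityMeasure μ]
    (X : ℕ → Ω → α) (hXmeas : ∀ i, Measurable (X i))
    (hindep : ProbabilityTheory.iIndepFun (m := fun _ => ‹MeasurableSpace α›) X μ)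
    (p : α → ℝ) (hdist : ∀ i a, (μ (X i ⁻¹' {a})).toReal = p a)
    {H : ℝ} (hH : H = -∑ a, p a * Real.logb 2 (p a))
    (γ : ∀ n : ℕ, (Fin n → α) → List Bool) (hγ : ∀ n, Function.Injective (γ n)) :
    ∀ᵐ ω ∂μ, ENNReal.ofReal H ≤
      atTop.liminf (fun n : ℕ =>
        ((γ n (fun i : Fin n => X i ω)).length : ℝ≥0∞) / (n : ℝ≥0∞)) := by
  have haep := ae_tendsto_average_comp hXmeas hindep hdist fun a => -Real.logb 2 (p a)
  have hentropy : ∑ a, p a * -Real.logb 2 (p a) = H := by simp [hH, sum_neg_distrib]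
  refine ae_ofReal_le_of_forall_pos fun ε hε => ?_
  rcases le_or_gt (H - ε) 0 with hle | hpos
  · exact ae_of_all _ fun ω => by simp [ofReal_eq_zero.2 hle]
  filter_upwards [haep, ae_eventually_lt_length hindep hdist hγ hpos.le (half_pos hε)]
    with ω hlim hcode
  refine ofReal_le_liminf_div ?_
  filter_upwards [hcode, eventually_mul_le_of_tendsto_inv_mul (hentropy ▸ hlim)
    (show H - ε + ε / 2 < H by linarith)] with n hn hinfo
  exact (hn hinfo).le
end

section
/- (Khinchin inequality, i.i.d. case) For any i.i.d. source with entropy H over a finite alphabet and any one-to-one code sequence γ, liminf_n (1/n) Σ_{x ∈ X^n} ||γ(x)|| · p(x) ≥ H. -/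
/-!
A one-to-one binary code has at most `2 ^ ℓ` codewords of length `ℓ`, so on a set of at most
`2 ^ m` words its Kraft sum `∑ 2 ^ (-ℓ(x))` is at most `m + 1` (each length below `m` contributes
at most `1`, all longer codewords together at most `1`). Gibbs' inequality against the weights
`2 ^ (-ℓ(x))` bounds the expected length from below by the entropy minus `log₂` of the Kraft sum.
The entropy of `pⁿ` is `n H` and `|Xⁿ| ≤ 2 ^ (n |X|)`, so the expected length per symbol is at
least `H - log₂ (n |X| + 1) / n → H`.
-/

section

open Filter Finset Real Topology
open scoped ENNReal

lemma card_filter_length_eq_le_of_injective {β : Type*} [Fintype β] {f : β → List Bool}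
    (hf : Function.Injective f) (ℓ : ℕ) : #{x | (f x).length = ℓ} ≤ 2 ^ ℓ := by
  classical
  have h := card_filter_length_eq_le (T := univ.image f) (s := ℓ)
  rwa [filter_image, card_image_of_injective _ hf, Fintype.card_bool] at h

lemma sum_filter_length_eq_inv_two_pow_le_one {β : Type*} [Fintype β] {f : β → List Bool}
    (hf : Function.Injective f) (ℓ : ℕ) :
    ∑ x with (f x).length = ℓ, (2⁻¹ : ℝ) ^ (f x).length ≤ 1 := by
  rw [sum_congr rfl fun x hx => by rw [(mem_filter.1 hx).2], sum_const, nsmul_eq_mul, inv_pow,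
    mul_inv_le_iff₀ (by positivity), one_mul]
  exact_mod_cast card_filter_length_eq_le_of_injective hf ℓ

lemma sum_inv_two_pow_length_le_of_injective {β : Type*} [Fintype β] {f : β → List Bool}
    (hf : Function.Injective f) {m : ℕ} (hm : Fintype.card β ≤ 2 ^ m) :
    ∑ x, (2⁻¹ : ℝ) ^ (f x).length ≤ m + 1 := by
  rw [← sum_filter_add_sum_filter_not univ fun x => (f x).length < m]
  gcongr ?_ + ?_
  · rw [← sum_fiberwise_of_maps_to (t := range m) (g := fun x => (f x).length) (by simp)]
    calc ∑ ℓ ∈ range m, ∑ x ∈ {x | (f x).length < m} with (f x).length = ℓ,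
          (2⁻¹ : ℝ) ^ (f x).length
        ≤ ∑ ℓ ∈ range m, ∑ x with (f x).length = ℓ, (2⁻¹ : ℝ) ^ (f x).length := by
          gcongr with ℓ
          exact subset_univ _
      _ ≤ ∑ ℓ ∈ range m, 1 := by
          gcongr with ℓ
          exact sum_filter_length_eq_inv_two_pow_le_one hf ℓ
      _ = m := by simp
  · calc ∑ x with ¬(f x).length < m, (2⁻¹ : ℝ) ^ (f x).length
        ≤ ∑ x with ¬(f x).length < m, (2⁻¹ : ℝ) ^ m := by
          refine sum_le_sum fun x hx => pow_le_pow_of_le_one (by norm_num) (by norm_num) ?_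
          exact not_lt.1 (mem_filter.1 hx).2
      _ ≤ Fintype.card β * (2⁻¹ : ℝ) ^ m := by
          rw [sum_const, nsmul_eq_mul]
          gcongr
          exact_mod_cast card_le_univ _
      _ ≤ 1 := by
          rw [inv_pow, mul_inv_le_iff₀ (by positivity), one_mul]
          exact_mod_cast hm

lemma mul_log_sub_mul_log_le {P q : ℝ} (hP : 0 ≤ P) (hq : 0 < q) :
    P * log q - P * log P ≤ q - P := by
  rcases hP.eq_or_lt with rfl | hP
  · simpa using hq.le
  · have h := mul_le_mul_of_nonneg_left (log_le_sub_one_of_pos (div_pos hq hP)) hP.le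
    rw [log_div hq.ne' hP.ne', mul_sub, mul_sub, mul_div_cancel₀ _ hP.ne', mul_one] at h
    exact h

lemma sum_mul_log_le_sum_mul_log_add_log {ι : Type*} [Fintype ι] {P q : ι → ℝ} {C : ℝ}
    (hP : ∀ i, 0 ≤ P i) (hP1 : ∑ i, P i = 1) (hq : ∀ i, 0 < q i) (hqC : ∑ i, q i ≤ C) :
    ∑ i, P i * log (q i) ≤ ∑ i, P i * log (P i) + log C := by
  obtain ⟨i₀, -, -⟩ := exists_ne_zero_of_sum_ne_zero (hP1 ▸ one_ne_zero : ∑ i, P i ≠ 0)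
  have hQ : 0 < ∑ i, q i := sum_pos (fun i _ => hq i) ⟨i₀, mem_univ _⟩
  have key := sum_le_sum fun i (_ : i ∈ univ) =>
    mul_log_sub_mul_log_le (hP i) (div_pos (hq i) hQ)
  simp only [log_div (hq _).ne' hQ.ne', mul_sub, sum_sub_distrib, ← sum_div, ← sum_mul, hP1,
    div_self hQ.ne', one_mul] at key
  linarith [log_le_log hQ hqC]

noncomputable def entropy {β : Type*} [Fintype β] (P : β → ℝ) : ℝ := -∑ x, P x * logb 2 (P x)

lemma entropy_le_sum_length_mul_add_logb {β : Type*} [Fintype β] {P : β → ℝ}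
    (hP0 : ∀ x, 0 ≤ P x) (hP1 : ∑ x, P x = 1) {f : β → List Bool} (hf : Function.Injective f)
    {m : ℕ} (hm : Fintype.card β ≤ 2 ^ m) :
    entropy P ≤ ∑ x, (f x).length * P x + logb 2 (m + 1) := by
  have gibbs := sum_mul_log_le_sum_mul_log_add_log hP0 hP1 (fun x => by positivity)
    (sum_inv_two_pow_length_le_of_injective hf hm)
  simp only [log_pow, log_inv] at gibbs
  have hentropy : entropy P = -(∑ x, P x * log (P x)) / log 2 := by
    simp only [entropy, logb, mul_div_assoc', sum_div, neg_div]
  have hlength : ∑ x, P x * ((f x).length * -log 2) = -(∑ x, (f x).length * P x) * log 2 := by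
    rw [neg_mul, sum_mul, ← sum_neg_distrib]
    exact sum_congr rfl fun x _ => by ring
  have hlog2 : 0 < log 2 := log_pos one_lt_two
  rw [hentropy, logb, div_le_iff₀ hlog2, add_mul, div_mul_cancel₀ _ hlog2.ne']
  linarith

lemma sum_prod_apply_eq_one {α : Type*} [Fintype α] {p : α → ℝ} (hp1 : ∑ a, p a = 1) (n : ℕ) :
    ∑ x : Fin n → α, ∏ i, p (x i) = 1 := by
  classical
  rw [← Fintype.prod_sum fun _ => p, hp1, prod_const_one]

lemma sum_prod_mul_sum_apply {α : Type*} [Fintype α] {p : α → ℝ} (hp1 : ∑ a, p a = 1)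
    (g : α → ℝ) (n : ℕ) :
    ∑ x : Fin n → α, (∏ i, p (x i)) * ∑ i, g (x i) = n * ∑ a, p a * g a := by
  classical
  have marginal (i : Fin n) :
      ∑ x : Fin n → α, (∏ j, p (x j)) * g (x i) = ∑ a, p a * g a := by
    have factor (j : Fin n) :
        ∑ a, p a * (if j = i then g a else 1) = if j = i then ∑ a, p a * g a else 1 := by
      split_ifs <;> simp [hp1]
    have h := Fintype.prod_sum fun j a => p a * if j = i then g a else 1
    simp only [prod_mul_distrib, prod_ite_eq', mem_univ, if_true] at h
    rw [← h]
    simp only [factor, prod_ite_eq', mem_univ, if_true]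
  calc ∑ x : Fin n → α, (∏ i, p (x i)) * ∑ i, g (x i)
      = ∑ i, ∑ x : Fin n → α, (∏ j, p (x j)) * g (x i) := by simp only [mul_sum]; exact sum_comm
    _ = n * ∑ a, p a * g a := by simp [marginal]

lemma entropy_pi {α : Type*} [Fintype α] {p : α → ℝ} (hp1 : ∑ a, p a = 1) (n : ℕ) :
    entropy (fun x : Fin n → α => ∏ i, p (x i)) = n * entropy p := by
  have h (x : Fin n → α) : (∏ i, p (x i)) * logb 2 (∏ i, p (x i)) =
      (∏ i, p (x i)) * ∑ i, logb 2 (p (x i)) := by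
    by_cases hx : ∏ i, p (x i) = 0
    · simp [hx]
    · rw [logb_prod _ _ fun i _ => prod_ne_zero_iff.1 hx i (mem_univ i)]
  simp only [entropy, h, sum_prod_mul_sum_apply hp1 fun a => logb 2 (p a), mul_neg]

lemma tendsto_logb_mul_natCast_add_one_div {b c : ℝ} (hc : 0 ≤ c) :
    Tendsto (fun n : ℕ => logb b (c * n + 1) / n) atTop (𝓝 0) := by
  rcases hc.eq_or_lt with rfl | hc
  · simp
  have h := (tendsto_pow_log_div_mul_add_atTop c⁻¹ (-c⁻¹) 1 (inv_ne_zero hc.ne')).comp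
    (tendsto_atTop_add_const_right _ 1 (tendsto_natCast_atTop_atTop.const_mul_atTop hc))
  have h' := h.div_const (log b)
  rw [zero_div] at h'
  refine h'.congr fun n => ?_
  simp only [Function.comp, pow_one, logb]
  rw [show c⁻¹ * (c * n + 1) + -c⁻¹ = n by field_simp; ring, div_right_comm]

lemma ENNReal.ofReal_le_liminf_of_tendsto {ι : Type*} {l : Filter ι} [l.NeBot] {u : ι → ℝ}
    {a : ℝ} {F : ι → ℝ≥0∞} (hu : Tendsto u l (𝓝 a))
    (hF : ∀ᶠ i in l, ENNReal.ofReal (u i) ≤ F i) : ENNReal.ofReal a ≤ l.liminf F := by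
  rw [← ((ENNReal.continuous_ofReal.tendsto a).comp hu).liminf_eq]
  exact liminf_le_liminf hF

lemma ENNReal.sum_natCast_mul_ofReal {β : Type*} (s : Finset β) (ℓ : β → ℕ) {P : β → ℝ}
    (hP : ∀ x ∈ s, 0 ≤ P x) :
    ∑ x ∈ s, (ℓ x : ℝ≥0∞) * ENNReal.ofReal (P x) = ENNReal.ofReal (∑ x ∈ s, ℓ x * P x) := by
  rw [ENNReal.ofReal_sum_of_nonneg fun x hx => mul_nonneg (Nat.cast_nonneg _) (hP x hx)]
  refine sum_congr rfl fun x _ => ?_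
  rw [ENNReal.ofReal_mul (Nat.cast_nonneg _), ENNReal.ofReal_natCast]

end

open Filter ENNReal

/-- Khinchin inequality (i.i.d. case): for an i.i.d. source with entropy `H`
and any one-to-one code sequence `γ`,
`liminf_n (1/n) ∑_{x ∈ X^n} ‖γ(x)‖ p(x) ≥ H`. -/
theorem khinchin_inequality_iid {α : Type*} [Fintype α]
    (p : α → ℝ) (hp0 : ∀ a, 0 ≤ p a) (hp1 : ∑ a, p a = 1)
    {H : ℝ} (hH : H = -∑ a, p a * Real.logb 2 (p a))
    (γ : ∀ n : ℕ, (Fin n → α) → List Bool) (hγ : ∀ n, Function.Injective (γ n)) :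
    ENNReal.ofReal H ≤
      atTop.liminf (fun n : ℕ =>
        (∑ x : Fin n → α,
          ((γ n x).length : ℝ≥0∞) * ENNReal.ofReal (∏ i, p (x i))) / (n : ℝ≥0∞)) := by
  set k := Fintype.card α
  have hP0 (n : ℕ) (x : Fin n → α) : 0 ≤ ∏ i, p (x i) := Finset.prod_nonneg fun i _ => hp0 (x i)
  have hblock (n : ℕ) :
      n * H ≤ ∑ x : Fin n → α, (γ n x).length * ∏ i, p (x i) + Real.logb 2 (k * n + 1) := by
    have hcard : Fintype.card (Fin n → α) ≤ 2 ^ (k * n) := by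
      rw [Fintype.card_fun, Fintype.card_fin, pow_mul]
      exact Nat.pow_le_pow_left Nat.lt_two_pow_self.le n
    have h := entropy_le_sum_length_mul_add_logb (hP0 n) (sum_prod_apply_eq_one hp1 n) (hγ n) hcard
    rwa [entropy_pi hp1, entropy, ← hH, Nat.cast_mul] at h
  refine ENNReal.ofReal_le_liminf_of_tendsto (u := fun n : ℕ => H - Real.logb 2 (k * n + 1) / n)
    ?_ ?_
  · simpa using
      tendsto_const_nhds.sub (tendsto_logb_mul_natCast_add_one_div (b := 2) k.cast_nonneg)
  · filter_upwards [eventually_gt_atTop 0] with n hn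
    rw [ENNReal.sum_natCast_mul_ofReal _ _ fun x _ => hP0 n x, ← ENNReal.ofReal_natCast,
      ← ENNReal.ofReal_div_of_pos (by exact_mod_cast hn)]
    refine ENNReal.ofReal_le_ofReal ?_
    rw [sub_le_iff_le_add, ← add_div, le_div_iff₀ (by exact_mod_cast hn)]
    linarith [hblock n]
end

section
/- (Barron's lemma, consequence) For any prefix-code sequence γ (so that γ restricted to X^n has prefix-free image, hence Kraft's inequality Σ_{x∈X^n} 2^(−||γ(x)||) ≤ 1 holds) and any i.i.d. source with entropy H, almost surely liminf_n ||γ(X_1,...,X_n)||/n ≥ H. -/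
/-!
Barron's argument. By Kraft's inequality the lengths `ℓ(x) = ‖γ(x)‖` satisfy `∑ 2^{-ℓ(x)} ≤ 1`, so
the event that the code beats the ideal length `-log₂ P(X^n)` by at least `log₂ t` has probability
at most `∑ P(x) ≤ ∑ 2^{-ℓ(x)} / t ≤ 1 / t`. With `t = (n + 1)²` these probabilities are summable,
so by Borel–Cantelli almost surely `‖γ(X^n)‖ > -log₂ P(X^n) - 2 log₂ (n + 1)` for all large `n`;
dividing by `n`, the strong law of large numbers sends `-(1/n) log₂ P(X^n)` to `H`.
-/

open MeasureTheory Filter ENNReal ProbabilityTheory InformationTheory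
open scoped Topology

theorem ofReal_le_liminf_natCast_div {a e : ℕ → ℝ} {ℓ : ℕ → ℕ} {H : ℝ}
    (ha : Tendsto (fun n : ℕ => (n : ℝ)⁻¹ * a n) atTop (𝓝 H))
    (he : Tendsto (fun n => e n / n) atTop (𝓝 0)) (hle : ∀ᶠ n in atTop, a n ≤ ℓ n + e n) :
    ENNReal.ofReal H ≤ atTop.liminf fun n => (ℓ n : ℝ≥0∞) / n := by
  have hlim : Tendsto (fun n : ℕ => (n : ℝ)⁻¹ * a n - e n / n) atTop (𝓝 H) := by
    simpa using ha.sub he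
  rw [← ((ENNReal.continuous_ofReal.tendsto H).comp hlim).liminf_eq]
  refine liminf_le_liminf ?_
  filter_upwards [hle, eventually_gt_atTop 0] with n hn hpos
  have hpos : (0 : ℝ) < n := Nat.cast_pos.mpr hpos
  rw [Function.comp_apply, ← ENNReal.ofReal_natCast (ℓ n), ← ENNReal.ofReal_natCast n,
    ← ENNReal.ofReal_div_of_pos hpos]
  refine ENNReal.ofReal_le_ofReal ?_
  rw [inv_mul_eq_div, ← sub_div]
  exact div_le_div_of_nonneg_right (by linarith) hpos.le

theorem tendsto_logb_succ_sq_div_atTop :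
    Tendsto (fun n : ℕ => Real.logb 2 (((n : ℝ) + 1) ^ 2) / n) atTop (𝓝 0) := by
  have hlog := (Real.tendsto_pow_log_div_mul_add_atTop 1 (-1) 1 one_ne_zero).comp
    (tendsto_atTop_add_const_right atTop 1 tendsto_natCast_atTop_atTop)
  convert hlog.const_mul (2 / Real.log 2) using 2 with n
  · simp [Real.logb, Real.log_pow]
    ring
  · simp

namespace ProbabilityTheory

theorem iIndepFun.measure_preimage_pi_singleton {Ω ι β : Type*} [MeasurableSpace Ω]
    {μ : Measure Ω} [Fintype ι] [MeasurableSpace β]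
    [MeasurableSingletonClass β] {X : ι → Ω → β} (hindep : iIndepFun X μ) (x : ι → β) :
    μ ((fun ω i => X i ω) ⁻¹' {x}) = ∏ i, μ (X i ⁻¹' {x i}) := by
  classical
  have hcyl : (fun ω i => X i ω) ⁻¹' {x} = ⋂ i ∈ Finset.univ, X i ⁻¹' {x i} := by
    ext ω
    simp [funext_iff]
  rw [hcyl, hindep.measure_inter_preimage_eq_mul Finset.univ fun i _ => measurableSet_singleton _]

section FiniteAlphabet

variable {α Ω : Type*} [Fintype α] [MeasurableSpace α] [MeasurableSingletonClass α]
  [MeasurableSpace Ω] {μ : Measure Ω} {X : ℕ → Ω → α} {p : α → ℝ}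

theorem map_eq_map_zero_of_measureReal_preimage_singleton [IsFiniteMeasure μ]
    (hX : ∀ i, Measurable (X i))
    (hdist : ∀ i a, μ.real (X i ⁻¹' {a}) = p a) (i : ℕ) : μ.map (X i) = μ.map (X 0) := by
  refine Measure.ext_iff_singleton.mpr fun a => ?_
  rw [Measure.map_apply (hX i) (measurableSet_singleton a),
    Measure.map_apply (hX 0) (measurableSet_singleton a)]
  exact (ENNReal.toReal_eq_toReal_iff' (measure_ne_top μ _) (measure_ne_top μ _)).mp
    ((hdist i a).trans (hdist 0 a).symm)

theorem ae_forall_pos_of_measureReal_preimage_singleton [IsFiniteMeasure μ]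
    (hX : ∀ i, Measurable (X i)) (hdist : ∀ i a, μ.real (X i ⁻¹' {a}) = p a) :
    ∀ᵐ ω ∂μ, ∀ i, 0 < p (X i ω) := by
  refine ae_all_iff.mpr fun i => ae_of_ae_map (p := fun a => 0 < p a) (hX i).aemeasurable ?_
  refine ae_iff_of_countable.mpr fun a ha => ?_
  rw [Measure.map_apply (hX i) (measurableSet_singleton a)] at ha
  exact hdist i a ▸ ENNReal.toReal_pos ha (measure_ne_top μ _)

theorem ae_tendsto_average_comp_of_measureReal_preimage_singleton [IsProbabilityMeasure μ]
    (hX : ∀ i, Measurable (X i))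
    (hindep : Pairwise fun i j => IndepFun (X i) (X j) μ)
    (hdist : ∀ i a, μ.real (X i ⁻¹' {a}) = p a) (f : α → ℝ) :
    ∀ᵐ ω ∂μ, Tendsto (fun n : ℕ => (n : ℝ)⁻¹ * ∑ i ∈ Finset.range n, f (X i ω)) atTop
      (𝓝 (∑ a, p a * f a)) := by
  have hf : Measurable f := measurable_of_countable f
  have hint : Integrable f (μ.map (X 0)) := .of_finite
  have hmean : ∫ ω, f (X 0 ω) ∂μ = ∑ a, p a * f a := by
    rw [← integral_map (hX 0).aemeasurable hf.aestronglyMeasurable, integral_fintype hint]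
    refine Finset.sum_congr rfl fun a _ => ?_
    rw [measureReal_def, Measure.map_apply (hX 0) (measurableSet_singleton a), ← measureReal_def,
      hdist, smul_eq_mul]
  have hident : ∀ i, IdentDistrib (fun ω => f (X i ω)) (fun ω => f (X 0 ω)) μ μ := fun i =>
    (IdentDistrib.mk (hX i).aemeasurable (hX 0).aemeasurable
      (map_eq_map_zero_of_measureReal_preimage_singleton hX hdist i)).comp hf
  have hslln := strong_law_ae (fun i ω => f (X i ω)) (hint.comp_measurable (hX 0))
    (fun i j hij => (hindep hij).comp hf hf) hident
  simpa only [hmean, smul_eq_mul] using hslln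

end FiniteAlphabet

end ProbabilityTheory

namespace InformationTheory

theorem uniquelyDecodable_of_prefix_free {α : Type*} {S : Set (List α)} (hnil : [] ∉ S)
    (hS : ∀ u ∈ S, ∀ v ∈ S, u <+: v → u = v) : UniquelyDecodable S := by
  intro L₁ L₂ h₁ h₂ hflat
  induction L₁ generalizing L₂ with
  | nil =>
    cases L₂ with
    | nil => rfl
    | cons v L₂ =>
      simp only [List.flatten_nil, List.flatten_cons, List.nil_eq_append_iff] at hflat
      exact absurd (hflat.1 ▸ h₂ v List.mem_cons_self) hnil
  | cons u L₁ ih =>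
    cases L₂ with
    | nil =>
      simp only [List.flatten_nil, List.flatten_cons, List.append_eq_nil_iff] at hflat
      exact absurd (hflat.1 ▸ h₁ u List.mem_cons_self) hnil
    | cons v L₂ =>
      have hu := h₁ u List.mem_cons_self
      have hv := h₂ v List.mem_cons_self
      simp only [List.flatten_cons] at hflat
      obtain rfl : u = v := by
        rcases List.prefix_or_prefix_of_prefix (List.prefix_append u L₁.flatten)
          (hflat ▸ List.prefix_append v L₂.flatten) with h | h
        · exact hS u hu v hv h
        · exact (hS v hv u hu h).symm
      rw [ih L₂ (fun w hw => h₁ w (List.mem_cons_of_mem _ hw))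
        (fun w hw => h₂ w (List.mem_cons_of_mem _ hw)) (List.append_cancel_left hflat)]

theorem sum_inv_card_pow_length_le_one_of_prefix_free {β γ : Type*} [Fintype β] [Fintype γ]
    [Nonempty γ] (c : β → List γ) (hc : ∀ x y, x ≠ y → ¬ c x <+: c y) :
    ∑ x, (1 / Fintype.card γ : ℝ) ^ (c x).length ≤ 1 := by
  classical
  -- Kraft–McMillan excludes the empty word; prefix-freeness makes it the only codeword.
  by_cases hnil : ∃ x, c x = []
  · obtain ⟨x, hx⟩ := hnil
    have hothers : ∀ y, y ≠ x → (1 / Fintype.card γ : ℝ) ^ (c y).length = 0 :=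
      fun y hy => absurd (hx ▸ List.nil_prefix) (hc x y hy.symm)
    rw [Fintype.sum_eq_single x hothers, hx, List.length_nil, pow_zero]
  · have hinj : c.Injective := fun x y hxy =>
      by_contra fun hne => hc x y hne (hxy ▸ List.prefix_refl _)
    rw [← Finset.sum_image (f := fun w => (1 / Fintype.card γ : ℝ) ^ w.length)
      fun x _ y _ h => hinj h]
    refine kraft_mcmillan_inequality (uniquelyDecodable_of_prefix_free ?_ ?_)
    · simpa using hnil
    · simp only [Finset.coe_image, Finset.coe_univ, Set.image_univ, Set.forall_mem_range]
      intro x y hxy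
      by_contra hne
      exact hc x y (fun h => hne (h ▸ rfl)) hxy

theorem le_half_pow_mul_inv_of_add_logb_le_neg_logb {q t : ℝ} {ℓ : ℕ} (hq : 0 ≤ q) (ht : 0 < t)
    (h : ℓ + Real.logb 2 t ≤ -Real.logb 2 q) : q ≤ (1 / 2) ^ ℓ * t⁻¹ := by
  rcases hq.eq_or_lt with rfl | hq
  · positivity
  have hlog : Real.logb 2 (2 ^ ℓ * t * q) ≤ 0 := by
    rw [Real.logb_mul (by positivity) hq.ne', Real.logb_mul (by positivity) ht.ne',
      Real.logb_pow, Real.logb_self_eq_one one_lt_two]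
    linarith
  have hprod : 2 ^ ℓ * t * q ≤ 1 := (Real.logb_nonpos_iff one_lt_two (by positivity)).mp hlog
  rw [div_pow, one_pow, one_div, ← mul_inv, ← one_div, le_div_iff₀ (by positivity)]
  linarith

theorem measure_length_add_logb_le_neg_logb_le {Ω β : Type*} [MeasurableSpace Ω]
    {μ : Measure Ω} [IsFiniteMeasure μ] [Fintype β] (Z : Ω → β) {q : β → ℝ}
    (hq : ∀ b, μ.real (Z ⁻¹' {b}) = q b) {ℓ : β → ℕ} (hkraft : ∑ b, (1 / 2 : ℝ) ^ ℓ b ≤ 1)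
    {t : ℝ} (ht : 0 < t) :
    μ {ω | ℓ (Z ω) + Real.logb 2 t ≤ -Real.logb 2 (q (Z ω))} ≤ ENNReal.ofReal t⁻¹ := by
  classical
  set S := Finset.univ.filter fun b => ℓ b + Real.logb 2 t ≤ -Real.logb 2 (q b)
  have hevent : {ω | ℓ (Z ω) + Real.logb 2 t ≤ -Real.logb 2 (q (Z ω))} = ⋃ b ∈ S, Z ⁻¹' {b} := by
    ext ω
    simp [S]
  rw [ENNReal.le_ofReal_iff_toReal_le (measure_ne_top μ _) (by positivity), ← measureReal_def,
    hevent]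
  calc μ.real (⋃ b ∈ S, Z ⁻¹' {b})
      ≤ ∑ b ∈ S, q b := (measureReal_biUnion_finset_le S _).trans_eq (by simp only [hq])
    _ ≤ ∑ b ∈ S, (1 / 2 : ℝ) ^ ℓ b * t⁻¹ := Finset.sum_le_sum fun b hb =>
        le_half_pow_mul_inv_of_add_logb_le_neg_logb (hq b ▸ measureReal_nonneg) ht
          (Finset.mem_filter.mp hb).2
    _ ≤ (∑ b, (1 / 2 : ℝ) ^ ℓ b) * t⁻¹ := by
        rw [Finset.sum_mul]
        exact Finset.sum_le_sum_of_subset_of_nonneg (Finset.subset_univ S)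
          fun b _ _ => by positivity
    _ ≤ t⁻¹ := mul_le_of_le_one_left (by positivity) hkraft

end InformationTheory

theorem liminf_prefix_code_length_ge_entropy_iid_general {α : Type*} [Fintype α]
    [MeasurableSpace α] [MeasurableSingletonClass α]
    {Ω : Type*} [MeasurableSpace Ω] (μ : Measure Ω) [IsProbabilityMeasure μ]
    (X : ℕ → Ω → α) (hXmeas : ∀ i, Measurable (X i))
    (hindep : ProbabilityTheory.iIndepFun X μ)
    (p : α → ℝ) (hdist : ∀ i a, (μ (X i ⁻¹' {a})).toReal = p a)
    {H : ℝ} (hH : H = -∑ a, p a * Real.logb 2 (p a))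
    (γ : ∀ n : ℕ, (Fin n → α) → List Bool)
    (hprefix : ∀ n, ∀ x y : Fin n → α, x ≠ y → ¬ (γ n x <+: γ n y)) :
    ∀ᵐ ω ∂μ, ENNReal.ofReal H ≤
      atTop.liminf (fun n : ℕ =>
        ((γ n (fun i : Fin n => X i ω)).length : ℝ≥0∞) / (n : ℝ≥0∞)) := by
  set A : ℕ → Set Ω := fun n => {ω | ((γ n fun i : Fin n => X i ω).length : ℝ) +
    Real.logb 2 (((n : ℝ) + 1) ^ 2) ≤ -Real.logb 2 (∏ i : Fin n, p (X i ω))}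
  have hA (n : ℕ) : μ (A n) ≤ ENNReal.ofReal (((n : ℝ) + 1) ^ 2)⁻¹ := by
    refine measure_length_add_logb_le_neg_logb_le (fun ω (i : Fin n) => X i ω) (fun x => ?_)
      (by simpa using sum_inv_card_pow_length_le_one_of_prefix_free (γ n) (hprefix n))
      (μ := μ) (q := fun x => ∏ i, p (x i)) (t := ((n : ℝ) + 1) ^ 2) (by positivity)
    rw [measureReal_def, (hindep.precomp Fin.val_injective).measure_preimage_pi_singleton,
      ENNReal.toReal_prod]
    exact Finset.prod_congr rfl fun i _ => hdist i (x i)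
  have hsum : Summable fun n : ℕ => (((n : ℝ) + 1) ^ 2)⁻¹ := by
    simpa using (summable_nat_add_iff 1).mpr (Real.summable_nat_pow_inv.mpr one_lt_two)
  have hBC : ∀ᵐ ω ∂μ, ∀ᶠ n in atTop, ω ∉ A n := by
    refine ae_eventually_notMem (ne_top_of_le_ne_top ?_ (ENNReal.tsum_le_tsum hA))
    rw [← ENNReal.ofReal_tsum_of_nonneg (fun n : ℕ => by positivity) hsum]
    exact ENNReal.ofReal_ne_top
  have hSLLN := ae_tendsto_average_comp_of_measureReal_preimage_singleton hXmeas
    (fun i j hij => hindep.indepFun hij) hdist fun a => -Real.logb 2 (p a)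
  rw [show ∑ a, p a * -Real.logb 2 (p a) = H by simp [hH, mul_neg]] at hSLLN
  filter_upwards [hSLLN, ae_forall_pos_of_measureReal_preimage_singleton hXmeas hdist, hBC]
    with ω hlim hpos hfin
  refine ofReal_le_liminf_natCast_div hlim tendsto_logb_succ_sq_div_atTop
    (hfin.mono fun n hn => ?_)
  rw [← Fin.sum_univ_eq_sum_range (fun i => -Real.logb 2 (p (X i ω))), Finset.sum_neg_distrib,
    ← Real.logb_prod _ (fun i : Fin n => p (X i ω)) fun i _ => (hpos i).ne']
  exact (not_le.mp hn).le

/-- Barron's lemma, consequence: for any prefix-code sequence `γ` (injective with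
prefix-free image on each `X^n`) and any i.i.d. source with entropy `H`,
almost surely `liminf_n ‖γ(X_1,…,X_n)‖ / n ≥ H`. -/
theorem liminf_prefix_code_length_ge_entropy_iid {α : Type*} [Fintype α]
    [MeasurableSpace α] [MeasurableSingletonClass α]
    {Ω : Type*} [MeasurableSpace Ω] (μ : Measure Ω) [IsProbabilityMeasure μ]
    (X : ℕ → Ω → α) (hXmeas : ∀ i, Measurable (X i))
    (hindep : ProbabilityTheory.iIndepFun X μ)
    (p : α → ℝ) (hdist : ∀ i a, (μ (X i ⁻¹' {a})).toReal = p a)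
    {H : ℝ} (hH : H = -∑ a, p a * Real.logb 2 (p a))
    (γ : ∀ n : ℕ, (Fin n → α) → List Bool) (hγ : ∀ n, Function.Injective (γ n))
    (hprefix : ∀ n, ∀ x y : Fin n → α, x ≠ y → ¬ (γ n x <+: γ n y)) :
    ∀ᵐ ω ∂μ, ENNReal.ofReal H ≤
      atTop.liminf (fun n : ℕ =>
        ((γ n (fun i : Fin n => X i ω)).length : ℝ≥0∞) / (n : ℝ≥0∞)) :=
  liminf_prefix_code_length_ge_entropy_iid_general μ X hXmeas hindep p hdist hH γ hprefix
end

section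
/- Let γ be a prefix-code sequence on X^n and p a probability measure on X^n. Then for any real a, the probability of the event {||γ(x)|| ≤ −log₂ p(x) − a} is at most 2^(−a). -/
open Real

lemma kraft_nat {β : Type*} [Fintype β] (c : β → List Bool)
    (hpf : ∀ x y : β, x ≠ y → ¬ (c x <+: c y))
    (L : ℕ) (hL : ∀ b, (c b).length ≤ L) :
    ∑ b : β, 2 ^ (L - (c b).length) ≤ 2 ^ L := by
  classical
  set φ : (Σ b : β, (Fin (L - (c b).length) → Bool)) → (Fin L → Bool) :=
    fun s i => (c s.1 ++ List.ofFn s.2).getD i false with hφ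
  have hlen : ∀ b : β, (c b ++ List.ofFn (f := fun _ : Fin (L - (c b).length) => false)).length = L := by
    intro b; simp [Nat.add_sub_cancel' (hL b)]
  have hlen' : ∀ s : (Σ b : β, (Fin (L - (c b).length) → Bool)),
      (c s.1 ++ List.ofFn s.2).length = L := by
    rintro ⟨b, f⟩; simp [Nat.add_sub_cancel' (hL b)]
  have hinj : Function.Injective φ := by
    rintro ⟨b, f⟩ ⟨b', f'⟩ h
    have hlists : c b ++ List.ofFn f = c b' ++ List.ofFn f' := by
      apply List.ext_getElem (by rw [hlen' ⟨b, f⟩, hlen' ⟨b', f'⟩])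
      intro i h1 h2
      have hi : i < L := by rw [← hlen' ⟨b, f⟩]; exact h1
      have := congrFun h ⟨i, hi⟩
      rw [hφ] at this
      simp only [List.getD_eq_getElem?_getD, List.getElem?_eq_getElem, h1, h2,
        Option.getD_some] at this
      exact this
    have hbb : b = b' := by
      by_contra hne
      rcases le_total (c b).length (c b').length with hle | hle
      · exact hpf b b' hne (List.prefix_of_prefix_length_le
          ⟨List.ofFn f, hlists⟩ (List.prefix_append _ _) hle)
      · exact hpf b' b (fun h' => hne (h'.symm)) (List.prefix_of_prefix_length_le
          (List.prefix_append _ _) ⟨List.ofFn f, hlists⟩ hle)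
    subst hbb
    have : List.ofFn f = List.ofFn f' := List.append_cancel_left hlists
    have : f = f' := List.ofFn_injective this
    simp [this]
  have hcard := Fintype.card_le_of_injective φ hinj
  simpa [Fintype.card_sigma] using hcard

lemma kraft_real {β : Type*} [Fintype β] (c : β → List Bool)
    (hpf : ∀ x y : β, x ≠ y → ¬ (c x <+: c y)) :
    ∑ b : β, (2 : ℝ) ^ (-((c b).length : ℝ)) ≤ 1 := by
  classical
  set L : ℕ := Finset.univ.sup (fun b : β => (c b).length) with hLdef
  have hL : ∀ b, (c b).length ≤ L := fun b => Finset.le_sup (f := fun b : β => (c b).length) (Finset.mem_univ b)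
  have key : ∀ b : β, (2 : ℝ) ^ (-((c b).length : ℝ))
      = (2 : ℕ) ^ (L - (c b).length) / (2 : ℝ) ^ L := by
    intro b
    rw [Real.rpow_neg (by norm_num), Real.rpow_natCast]
    push_cast
    rw [pow_sub₀ (2 : ℝ) (by norm_num) (hL b), mul_comm, mul_div_assoc,
      div_self (by positivity), mul_one]
  calc ∑ b : β, (2 : ℝ) ^ (-((c b).length : ℝ))
      = (∑ b : β, ((2 : ℕ) ^ (L - (c b).length) : ℝ)) / (2 : ℝ) ^ L := by
        rw [Finset.sum_div]; exact Finset.sum_congr rfl (fun b _ => key b)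
    _ ≤ ((2 : ℕ) ^ L : ℝ) / (2 : ℝ) ^ L := by
        apply div_le_div_of_nonneg_right ?_ (by positivity)
        · exact_mod_cast Nat.cast_le.mpr (kraft_nat c hpf L hL)
    _ = 1 := by push_cast; field_simp

/-- Barron's lemma, single-`n` form: for a prefix code `γ` on `X^n` and a
probability mass function `p` on `X^n`, the probability of the event
`‖γ(x)‖ ≤ -log₂ p(x) - a` is at most `2^(-a)`. -/
theorem barron_lemma_single_n {α : Type*} [Fintype α] {n : ℕ}
    (p : (Fin n → α) → ℝ) (hp0 : ∀ x, 0 < p x) (hp1 : ∑ x, p x = 1)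
    (γ : (Fin n → α) → List Bool) (hγ : Function.Injective γ)
    (hprefix : ∀ x y : Fin n → α, x ≠ y → ¬ (γ x <+: γ y)) (a : ℝ) :
    ∑ x ∈ Finset.univ.filter
        (fun x : Fin n → α => ((γ x).length : ℝ) ≤ -Real.logb 2 (p x) - a), p x
      ≤ (2 : ℝ) ^ (-a) := by
  classical
  set s := Finset.univ.filter
      (fun x : Fin n → α => ((γ x).length : ℝ) ≤ -Real.logb 2 (p x) - a) with hs
  have step1 : ∀ x ∈ s, p x ≤ (2 : ℝ) ^ (-a) * (2 : ℝ) ^ (-((γ x).length : ℝ)) := by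
    intro x hx
    have hxs : ((γ x).length : ℝ) ≤ -Real.logb 2 (p x) - a := by
      simpa [hs] using (Finset.mem_filter.mp hx).2
    have hlog : Real.logb 2 (p x) ≤ -a + (-((γ x).length : ℝ)) := by linarith
    calc p x = (2 : ℝ) ^ (Real.logb 2 (p x)) :=
          (Real.rpow_logb (by norm_num) (by norm_num) (hp0 x)).symm
      _ ≤ (2 : ℝ) ^ (-a + (-((γ x).length : ℝ))) :=
          Real.rpow_le_rpow_of_exponent_le (by norm_num) hlog
      _ = (2 : ℝ) ^ (-a) * (2 : ℝ) ^ (-((γ x).length : ℝ)) :=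
          Real.rpow_add (by norm_num) _ _
  calc ∑ x ∈ s, p x
      ≤ ∑ x ∈ s, (2 : ℝ) ^ (-a) * (2 : ℝ) ^ (-((γ x).length : ℝ)) :=
        Finset.sum_le_sum step1
    _ = (2 : ℝ) ^ (-a) * ∑ x ∈ s, (2 : ℝ) ^ (-((γ x).length : ℝ)) := by
        rw [Finset.mul_sum]
    _ ≤ (2 : ℝ) ^ (-a) * ∑ x : Fin n → α, (2 : ℝ) ^ (-((γ x).length : ℝ)) := by
        apply mul_le_mul_of_nonneg_left ?_ (by positivity)
        exact Finset.sum_le_sum_of_subset_of_nonneg (Finset.subset_univ s)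
          (fun x _ _ => by positivity)
    _ ≤ (2 : ℝ) ^ (-a) * 1 :=
        mul_le_mul_of_nonneg_left (kraft_real γ hprefix) (by positivity)
    _ = (2 : ℝ) ^ (-a) := mul_one _
end

section
/- Let γ_n : X^n → {0,1}* be injective for each n and suppose random sequences X_1, X_2, ... satisfy −(1/n) log₂ p(X_1,...,X_n) → H almost surely. Then for every ε > 0, almost surely ||γ_n(X_1,...,X_n)|| ≥ −log₂ p(X_1,...,X_n) − 3εn eventually (for all sufficiently large n). -/
open MeasureTheory Filter

/-- Encoding of a boolean list as a natural number with a leading 1 digit. -/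
def encBL : List Bool → ℕ
  | [] => 1
  | b :: l => 2 * encBL l + cond b 1 0

lemma encBL_pos : ∀ l : List Bool, 1 ≤ encBL l
  | [] => le_refl 1
  | b :: l => by
    have := encBL_pos l
    cases b <;> simp [encBL] <;> omega

lemma encBL_lt : ∀ l : List Bool, encBL l < 2 ^ (l.length + 1)
  | [] => by simp [encBL]
  | b :: l => by
    have := encBL_lt l
    cases b <;> simp [encBL, pow_succ] <;> omega

lemma encBL_injective : Function.Injective encBL := by
  intro l1
  induction l1 with
  | nil =>
    intro l2 h
    cases l2 with
    | nil => rfl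
    | cons b l =>
      exfalso
      have := encBL_pos l
      cases b <;> simp [encBL] at h <;> omega
  | cons b l ih =>
    intro l2 h
    cases l2 with
    | nil =>
      exfalso
      have := encBL_pos l
      cases b <;> simp [encBL] at h <;> omega
    | cons b' l' =>
      have hb : b = b' ∧ encBL l = encBL l' := by
        have h1 := encBL_pos l
        have h2 := encBL_pos l'
        cases b <;> cases b' <;> simp [encBL] at h <;> simp <;> omega
      rw [hb.1, ih hb.2]

/-- If `γ n : X^n → {0,1}*` is injective for each `n` and the source satisfies the
Shannon–McMillan–Breiman property `-(1/n) log₂ p(X_1,…,X_n) → H` almost surely,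
then for every `ε > 0`, almost surely eventually
`‖γ_n(X_1,…,X_n)‖ ≥ -log₂ p(X_1,…,X_n) - 3εn`. -/
theorem code_length_ge_log_prob_eventually {α : Type*} [Fintype α] [MeasurableSpace α]
    [MeasurableSingletonClass α]
    {Ω : Type*} [MeasurableSpace Ω] (μ : Measure Ω) [IsProbabilityMeasure μ]
    (X : ℕ → Ω → α) (hXmeas : ∀ i, Measurable (X i))
    (pn : ∀ n : ℕ, (Fin n → α) → ℝ)
    (hpn : ∀ n (w : Fin n → α), pn n w = (μ {ω | ∀ i : Fin n, X i ω = w i}).toReal)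
    {H : ℝ} (hH : 0 ≤ H)
    (hSMB : ∀ᵐ ω ∂μ, Tendsto
      (fun n : ℕ => -(1 / (n : ℝ)) * Real.logb 2 (pn n (fun i : Fin n => X i ω)))
      atTop (nhds H))
    (γ : ∀ n : ℕ, (Fin n → α) → List Bool) (hγ : ∀ n, Function.Injective (γ n)) :
    ∀ ε > (0 : ℝ), ∀ᵐ ω ∂μ, ∀ᶠ n in atTop,
      -Real.logb 2 (pn n (fun i : Fin n => X i ω)) - 3 * ε * n
        ≤ ((γ n (fun i : Fin n => X i ω)).length : ℝ) := by
  classical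
  intro ε hε
  set B : ℕ → ℝ := fun n => (2:ℝ) ^ (-((n:ℝ) * (H - ε))) with hB
  set C : ℕ → Set Ω := fun n => {ω | pn n (fun i : Fin n => X i ω) ≤ B n ∧
      ((γ n (fun i : Fin n => X i ω)).length : ℝ) < (n:ℝ) * (H - 2*ε)} with hC
  have hpn0 : ∀ n (w : Fin n → α), 0 ≤ pn n w := by
    intro n w; rw [hpn]; exact ENNReal.toReal_nonneg
  have hBpos : ∀ n, (0:ℝ) < B n := fun n => Real.rpow_pos_of_pos two_pos _
  have hCbound : ∀ n : ℕ, μ (C n) ≤ ENNReal.ofReal (4 * ((2:ℝ) ^ (-ε)) ^ n) := by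
    intro n
    by_cases hr : (n:ℝ) * (H - 2*ε) ≤ 0
    · have hempty : C n = ∅ := by
        ext ω
        simp only [hC, Set.mem_setOf_eq, Set.mem_empty_iff_false, iff_false, not_and, not_lt]
        intro _
        exact le_trans hr (Nat.cast_nonneg _)
      rw [hempty]
      simp
    · push_neg at hr
      set r : ℝ := (n:ℝ) * (H - 2*ε) with hrdef
      set t : ℕ := ⌈r⌉₊ with htdef
      set W : Finset (Fin n → α) :=
        Finset.univ.filter (fun w => pn n w ≤ B n ∧ ((γ n w).length : ℝ) < r) with hW
      have hsub : C n ⊆ ⋃ w ∈ W, {ω | (fun i : Fin n => X i ω) = w} := by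
        intro ω hω
        have hmemW : (fun i : Fin n => X i ω) ∈ W :=
          Finset.mem_filter.mpr ⟨Finset.mem_univ _, hω⟩
        exact Set.mem_biUnion hmemW rfl
      have h1 : μ (C n) ≤ ∑ w ∈ W, μ {ω | (fun i : Fin n => X i ω) = w} :=
        le_trans (measure_mono hsub) (measure_biUnion_finset_le _ _)
      have h2 : ∀ w ∈ W, μ {ω | (fun i : Fin n => X i ω) = w} = ENNReal.ofReal (pn n w) := by
        intro w _
        have hset : {ω | (fun i : Fin n => X i ω) = w} = {ω | ∀ i : Fin n, X i ω = w i} := by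
          ext ω; simp [funext_iff]
        rw [hset, hpn n w, ENNReal.ofReal_toReal (measure_ne_top μ _)]
      have h3 : μ (C n) ≤ ENNReal.ofReal (∑ w ∈ W, pn n w) := by
        rw [ENNReal.ofReal_sum_of_nonneg (fun w _ => hpn0 n w)]
        calc μ (C n) ≤ ∑ w ∈ W, μ {ω | (fun i : Fin n => X i ω) = w} := h1
          _ = ∑ w ∈ W, ENNReal.ofReal (pn n w) := Finset.sum_congr rfl h2
      have hcard : W.card ≤ 2 ^ (t + 1) := by
        have hmem : ∀ w ∈ W, encBL (γ n w) ∈ Finset.range (2 ^ (t + 1)) := by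
          intro w hw
          have hlen : ((γ n w).length : ℝ) < r := ((Finset.mem_filter.mp hw).2).2
          have hle : (γ n w).length ≤ t := by
            have : ((γ n w).length : ℝ) ≤ (t:ℝ) := le_trans hlen.le (Nat.le_ceil r)
            exact_mod_cast this
          exact Finset.mem_range.mpr (lt_of_lt_of_le (encBL_lt _)
            (Nat.pow_le_pow_right (by norm_num) (by omega)))
        have hinj : Set.InjOn (fun w => encBL (γ n w)) W :=
          fun a _ b _ h => hγ n (encBL_injective h)
        simpa using Finset.card_le_card_of_injOn _ hmem hinj
      have hpow : ((2:ℝ) ^ (t + 1) : ℝ) ≤ (2:ℝ) ^ (r + 2 : ℝ) := by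
        rw [← Real.rpow_natCast 2 (t + 1)]
        apply Real.rpow_le_rpow_of_exponent_le one_le_two
        have := Nat.ceil_lt_add_one hr.le
        push_cast
        linarith
      have hsumreal : ∑ w ∈ W, pn n w ≤ 4 * ((2:ℝ) ^ (-ε)) ^ n := by
        have hstep : ∑ w ∈ W, pn n w ≤ (W.card : ℝ) * B n := by
          have := Finset.sum_le_card_nsmul W (fun w => pn n w) (B n)
            (fun w hw => ((Finset.mem_filter.mp hw).2).1)
          simpa [nsmul_eq_mul] using this
        have hstep2 : (W.card : ℝ) * B n ≤ (2:ℝ) ^ (r + 2 : ℝ) * B n := by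
          apply mul_le_mul_of_nonneg_right _ (hBpos n).le
          calc (W.card : ℝ) ≤ ((2 ^ (t + 1) : ℕ) : ℝ) := by exact_mod_cast hcard
            _ = (2:ℝ) ^ (t + 1) := by push_cast; ring
            _ ≤ (2:ℝ) ^ (r + 2 : ℝ) := hpow
        have hfinal : (2:ℝ) ^ (r + 2 : ℝ) * B n = 4 * ((2:ℝ) ^ (-ε)) ^ n := by
          rw [hB, ← Real.rpow_add two_pos]
          have hexp : r + 2 + -((n:ℝ) * (H - ε)) = 2 + (n:ℝ) * (-ε) := by
            rw [hrdef]; ring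
          rw [hexp, Real.rpow_add two_pos, mul_comm (n:ℝ) (-ε),
            Real.rpow_mul (by norm_num : (0:ℝ) ≤ 2), Real.rpow_natCast]
          norm_num
        linarith
      calc μ (C n) ≤ ENNReal.ofReal (∑ w ∈ W, pn n w) := h3
        _ ≤ ENNReal.ofReal (4 * ((2:ℝ) ^ (-ε)) ^ n) := ENNReal.ofReal_le_ofReal hsumreal
  have hc0 : (0:ℝ) ≤ (2:ℝ) ^ (-ε) := (Real.rpow_pos_of_pos two_pos _).le
  have hc1 : (2:ℝ) ^ (-ε) < 1 :=
    Real.rpow_lt_one_of_one_lt_of_neg one_lt_two (neg_neg_iff_pos.mpr hε)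
  have hsummable : Summable (fun n : ℕ => 4 * ((2:ℝ) ^ (-ε)) ^ n) :=
    (summable_geometric_of_lt_one hc0 hc1).mul_left 4
  have htsum : (∑' n, μ (C n)) ≠ ⊤ := by
    refine ne_top_of_le_ne_top ?_ (ENNReal.tsum_le_tsum hCbound)
    rw [← ENNReal.ofReal_tsum_of_nonneg (fun n => by positivity) hsummable]
    exact ENNReal.ofReal_ne_top
  filter_upwards [hSMB, MeasureTheory.ae_eventually_notMem htsum] with ω hω hnot
  have hev1 : ∀ᶠ n : ℕ in atTop,
      dist (-(1 / (n:ℝ)) * Real.logb 2 (pn n (fun i : Fin n => X i ω))) H < ε :=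
    Metric.tendsto_nhds.mp hω ε hε
  filter_upwards [hev1, hnot, eventually_ge_atTop 1] with n hdist hnC hn1
  set p := pn n (fun i : Fin n => X i ω) with hp
  set L := Real.logb 2 p with hL
  have hnpos : (0:ℝ) < n := by exact_mod_cast Nat.lt_of_lt_of_le Nat.zero_lt_one hn1
  rw [Real.dist_eq, abs_lt] at hdist
  obtain ⟨hd1, hd2⟩ := hdist
  have hne : (n:ℝ) ≠ 0 := ne_of_gt hnpos
  have hfn : -(1 / (n:ℝ)) * L * n = -L := by field_simp
  have hub : -L < (H + ε) * n := by
    have h := mul_lt_mul_of_pos_right (by linarith : -(1 / (n:ℝ)) * L < H + ε) hnpos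
    linarith [hfn]
  have hlb : (H - ε) * n < -L := by
    have h := mul_lt_mul_of_pos_right (by linarith : H - ε < -(1 / (n:ℝ)) * L) hnpos
    linarith [hfn]
  have hp0 : 0 ≤ p := hpn0 n _
  have hple : p ≤ B n := by
    rcases hp0.eq_or_lt with h0 | hppos
    · rw [← h0]; exact (hBpos n).le
    · have hLle : L ≤ -((n:ℝ) * (H - ε)) := by
        rw [mul_comm (n:ℝ) (H - ε)]; linarith
      calc p = (2:ℝ) ^ L := (Real.rpow_logb two_pos (by norm_num) hppos).symm
        _ ≤ (2:ℝ) ^ (-((n:ℝ) * (H - ε))) := Real.rpow_le_rpow_of_exponent_le one_le_two hLle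
        _ = B n := rfl
  have hlen : (n:ℝ) * (H - 2*ε) ≤ ((γ n (fun i : Fin n => X i ω)).length : ℝ) := by
    by_contra hcon
    push_neg at hcon
    exact hnC ⟨hple, hcon⟩
  have hring : (H + ε) * (n:ℝ) - 3 * ε * n = (n:ℝ) * (H - 2*ε) := by ring
  linarith
end
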